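/- arXiv:0706.2428 — 6 statements merged into one kernel-verified Lean document; each statement's English description precedes it below -/
import Mathlib

section
/- Let n ≥ 1, let X ∈ M_n(ℂ), and let φ : M_n(ℂ) → ℝ be real-differentiable at X with gradient ∇φ|_X, such that φ(C X C⁻¹) = φ(X) for every invertible C ∈ M_n(ℂ) whose first row and first column have all off-diagonal entries equal to zero. Then for every B ∈ M_n(ℂ): ⟨∇φ|_X, [X, B]⟩ = ⟨∇φ|_X, [X, BP + PB]⟩, and consequently ⟨∇φ|_X, [X, B]⟩ = ⟨[∇φ|_X, X], BP + PB⟩. -/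
open Matrix Complex

attribute [local instance] Matrix.normedAddCommGroup Matrix.normedSpace

/-- The pairing `⟨X, Y⟩ = Im Tr (X Y)` on `n × n` complex matrices. -/
noncomputable def pairIm {n : ℕ} (X Y : Matrix (Fin n) (Fin n) ℂ) : ℝ :=
  (Matrix.trace (X * Y)).im

/-- `P`, the matrix whose `(1,1)` entry is `1` and all other entries are `0`. -/
noncomputable def Pmat (n : ℕ) (hn : 0 < n) : Matrix (Fin n) (Fin n) ℂ :=
  Matrix.single ⟨0, hn⟩ ⟨0, hn⟩ 1

/-!
For `A := B - (BP + PB)` the first row and column of `A` vanish off the diagonal, hence so do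
those of `1 + tA`, and `φ` is invariant under conjugation by `1 + tA` for small real `t`.
The curve `t ↦ (1 + tA) X (1 + tA)⁻¹` has velocity `[A, X]` at `t = 0`, so
`⟨∇φ, [X, A]⟩ = 0`; as `B - A = BP + PB`, this is the first identity, and cyclicity of the
trace moves the commutator with `X` onto `∇φ` for the second.
-/

open Topology

section Calculus

variable {𝕜 F : Type*} [NontriviallyNormedField 𝕜] [NormedAddCommGroup F] [NormedSpace 𝕜 F]

theorem hasDerivAt_add_smul_of_continuousAt (c : F) {g : 𝕜 → F} (hg : ContinuousAt g 0) :
    HasDerivAt (fun t => c + t • g t) (g 0) 0 := by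
  refine hasDerivAt_iff_tendsto_slope.mpr ((hg.tendsto.mono_left nhdsWithin_le_nhds).congr' ?_)
  filter_upwards [self_mem_nhdsWithin] with t (ht : t ≠ 0)
  simp [slope_def_module, smul_smul, inv_mul_cancel₀ ht]

end Calculus

theorem mul_mul_inv_eq_add_commutator_mul {R : Type*} [Ring R] [Inv R] {u : R} (X : R)
    (hu : u * u⁻¹ = 1) : u * X * u⁻¹ = X + (u * X - X * u) * u⁻¹ := by
  rw [sub_mul, mul_assoc X, hu, mul_one, add_sub_cancel]

section ConjugationCurve

variable {m 𝕜 : Type*} [Fintype m] [DecidableEq m] [NontriviallyNormedField 𝕜]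
  [NormedAlgebra ℝ 𝕜]

theorem eventually_isUnit_one_add_smul (A : Matrix m m 𝕜) :
    ∀ᶠ t in 𝓝 (0 : ℝ), IsUnit (1 + t • A) := by
  have hdet : Continuous fun t : ℝ => (1 + t • A).det := by fun_prop
  have h0 : (1 + (0 : ℝ) • A).det ≠ 0 := by simp
  filter_upwards [hdet.continuousAt.eventually_ne h0] with t ht
  exact (Matrix.isUnit_iff_isUnit_det _).2 (isUnit_iff_ne_zero.2 ht)

theorem hasDerivAt_conj_one_add_smul (A X : Matrix m m 𝕜) :
    HasDerivAt (fun t : ℝ => (1 + t • A) * X * (1 + t • A)⁻¹) (A * X - X * A) 0 := by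
  have hinv : ContinuousAt (fun t : ℝ => (1 + t • A)⁻¹) 0 := by
    refine ContinuousAt.comp (g := Inv.inv) ?_ (by fun_prop)
    refine continuousAt_matrix_inv _ ?_
    rw [Ring.inverse_eq_inv']
    exact continuousAt_inv₀ (by simp)
  have hg : ContinuousAt (fun t : ℝ => (A * X - X * A) * (1 + t • A)⁻¹) 0 :=
    continuousAt_const.mul hinv
  have hcurve := hasDerivAt_add_smul_of_continuousAt X hg
  simp only [zero_smul, add_zero, inv_one, mul_one] at hcurve
  refine hcurve.congr_of_eventuallyEq ?_
  filter_upwards [eventually_isUnit_one_add_smul A] with t ht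
  rw [mul_mul_inv_eq_add_commutator_mul X (Matrix.mul_nonsing_inv _
    ((Matrix.isUnit_iff_isUnit_det _).1 ht))]
  congr 1
  rw [← smul_mul_assoc]
  congr 1
  simp only [add_mul, mul_add, one_mul, mul_one, smul_mul_assoc, mul_smul_comm, smul_sub]
  abel

theorem HasFDerivAt.apply_commutator_eq_zero_of_conj_invariant {φ : Matrix m m 𝕜 → ℝ}
    {D : Matrix m m 𝕜 →L[ℝ] ℝ} {X : Matrix m m 𝕜} (hφ : HasFDerivAt φ D X) (A : Matrix m m 𝕜)
    (hinv : ∀ t : ℝ, IsUnit (1 + t • A) → φ ((1 + t • A) * X * (1 + t • A)⁻¹) = φ X) :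
    D (A * X - X * A) = 0 := by
  have hcomp : HasDerivAt (fun t : ℝ => φ ((1 + t • A) * X * (1 + t • A)⁻¹))
      (D (A * X - X * A)) 0 :=
    hφ.comp_hasDerivAt_of_eq 0 (hasDerivAt_conj_one_add_smul A X) (by simp)
  have hconst : HasDerivAt (fun t : ℝ => φ ((1 + t • A) * X * (1 + t • A)⁻¹)) 0 0 :=
    (hasDerivAt_const (0 : ℝ) (φ X)).congr_of_eventuallyEq
      ((eventually_isUnit_one_add_smul A).mono hinv)
  exact hcomp.unique hconst

end ConjugationCurve

theorem Matrix.sub_anticommutator_single_apply_of_ne {m R : Type*} [Fintype m] [DecidableEq m]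
    [Ring R] (B : Matrix m m R) {i j : m} (hj : j ≠ i) :
    (B - (B * single i i (1 : R) + single i i (1 : R) * B)) i j = 0 ∧
      (B - (B * single i i (1 : R) + single i i (1 : R) * B)) j i = 0 := by
  simp [Matrix.mul_single_apply_of_ne, Matrix.single_mul_apply_of_ne, hj]

theorem pairIm_sub_right {n : ℕ} (G Y Z : Matrix (Fin n) (Fin n) ℂ) :
    pairIm G (Y - Z) = pairIm G Y - pairIm G Z := by
  rw [pairIm, mul_sub, trace_sub, Complex.sub_im, pairIm, pairIm]

theorem pairIm_commutator_right {n : ℕ} (G X M : Matrix (Fin n) (Fin n) ℂ) :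
    pairIm G (X * M - M * X) = pairIm (G * X - X * G) M := by
  simp only [pairIm, mul_sub, sub_mul, trace_sub, ← mul_assoc, trace_mul_cycle G M X,
    trace_mul_comm (X * G) M]

/-- If `φ` is real-differentiable at `X` with gradient `G` (with respect to
the pairing `⟨X,Y⟩ = Im Tr(XY)`), and `φ` is invariant under conjugation by all invertible
matrices whose first row and column have all off-diagonal entries equal to zero, then for
every matrix `B` one has `⟨G, [X,B]⟩ = ⟨G, [X, BP + PB]⟩ = ⟨[G,X], BP + PB⟩`. -/
theorem statement0 (n : ℕ) (hn : 0 < n)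
    (X G B : Matrix (Fin n) (Fin n) ℂ)
    (φ : Matrix (Fin n) (Fin n) ℂ → ℝ)
    (D : Matrix (Fin n) (Fin n) ℂ →L[ℝ] ℝ)
    (hdiff : HasFDerivAt φ D X)
    (hgrad : ∀ C : Matrix (Fin n) (Fin n) ℂ, D C = pairIm G C)
    (hinv : ∀ C : Matrix (Fin n) (Fin n) ℂ, IsUnit C →
      (∀ j : Fin n, j ≠ ⟨0, hn⟩ → C ⟨0, hn⟩ j = 0 ∧ C j ⟨0, hn⟩ = 0) →
      φ (C * X * C⁻¹) = φ X) :
    pairIm G (X * B - B * X) =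
      pairIm G (X * (B * Pmat n hn + Pmat n hn * B) -
        (B * Pmat n hn + Pmat n hn * B) * X) ∧
    pairIm G (X * B - B * X) =
      pairIm (G * X - X * G) (B * Pmat n hn + Pmat n hn * B) := by
  set M := B * Pmat n hn + Pmat n hn * B
  have hA : ∀ j ≠ ⟨0, hn⟩, (B - M) ⟨0, hn⟩ j = 0 ∧ (B - M) j ⟨0, hn⟩ = 0 :=
    fun j hj => B.sub_anticommutator_single_apply_of_ne hj
  have hzero : pairIm G ((B - M) * X - X * (B - M)) = 0 := by
    rw [← hgrad]
    refine hdiff.apply_commutator_eq_zero_of_conj_invariant (B - M) fun t ht => hinv _ ht ?_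
    intro j hj
    simp [one_apply_ne hj, one_apply_ne hj.symm, hA j hj]
  have hsplit : pairIm G (X * B - B * X) = pairIm G (X * M - M * X) := by
    rw [show X * B - B * X = (X * M - M * X) - ((B - M) * X - X * (B - M)) by noncomm_ring,
      pairIm_sub_right, hzero, sub_zero]
  exact ⟨hsplit, hsplit.trans (pairIm_commutator_right G X M)⟩
end

section
/- Let n ≥ 2, let z₁,…,z_n be distinct points on the unit circle in ℂ, and let μ₁,…,μ_n ∈ (0,1) with μ₁+⋯+μ_n = 1. Define F(z) := Σ_{j=1}^n μ_j (z_j+z)/(z_j−z) and G(z,w) := i(F(z)−F(w))(F(z)F(w)−1) − i((z+w)/(z−w))(F(z)−F(w))². Let s ≠ t, and let δ, ε > 0 be small enough that the closed disks of radius δ around z_s and radius ε around z_t are disjoint and each contains exactly one of the points z₁,…,z_n. Then (1/(2πi)²) ∮_{|w−z_t|=ε} ∮_{|z−z_s|=δ} (z−z_s)(w−z_t) G(z,w) dz dw = 0. -/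
/-!
Near a pole `c` of `F` write `F ζ = P ζ / (ζ - c)` with `P` holomorphic on the disk. Then
`(ζ - c) G(ζ, w) = Φ(ζ) / (ζ - c)` with `Φ` holomorphic, so by Cauchy's formula the inner
integral is `2πi Φ(z_s) = 2πi · i P(z_s)² (F(w) - (z_s + w)/(z_s - w))`. As a function of `w`
this has only a simple pole at `z_t`, which the factor `w - z_t` removes, so the outer integral
vanishes by Cauchy–Goursat.
-/

open Complex Metric Finset Real

theorem exists_differentiableAt_sub_mul_sum_eq {ι : Type*} [Fintype ι] [DecidableEq ι]
    (a b : ι → ℂ) (s : ι) :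
    ∃ P : ℂ → ℂ, (∀ ζ, (∀ j ≠ s, ζ ≠ b j) → DifferentiableAt ℂ P ζ) ∧
      ∀ ζ ≠ b s, (ζ - b s) * ∑ j, a j * (b j + ζ) / (b j - ζ) = P ζ := by
  refine ⟨fun ζ => -(a s * (b s + ζ)) +
      ∑ j ∈ univ.erase s, a j * (ζ - b s) * (b j + ζ) / (b j - ζ), ?_, ?_⟩
  · intro ζ hζ
    refine (by fun_prop : DifferentiableAt ℂ (fun ζ => -(a s * (b s + ζ))) ζ).add
      (DifferentiableAt.fun_sum fun j hj => ?_)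
    have : b j - ζ ≠ 0 := sub_ne_zero.2 (hζ j (ne_of_mem_erase hj)).symm
    fun_prop (disch := exact this)
  · intro ζ hζ
    have hsζ : b s - ζ ≠ 0 := sub_ne_zero.2 hζ.symm
    rw [← add_sum_erase _ _ (mem_univ s), mul_add, mul_sum]
    congr 1
    · field_simp
      ring
    · exact sum_congr rfl fun j _ => by ring

theorem circleIntegral_sub_mul_bracket_eq {F P : ℂ → ℂ} {G : ℂ → ℂ → ℂ}
    (hG : ∀ ζ ω, G ζ ω = I * (F ζ - F ω) * (F ζ * F ω - 1) -
      I * ((ζ + ω) / (ζ - ω)) * (F ζ - F ω) ^ 2)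
    {c w : ℂ} {r : ℝ} (hr : 0 < r) (hP : DifferentiableOn ℂ P (closedBall c r))
    (hFP : ∀ ζ ∈ sphere c r, (ζ - c) * F ζ = P ζ) (hw : w ∉ closedBall c r) :
    ∮ ζ in C(c, r), (ζ - c) * G ζ w =
      2 * π * I * (I * P c ^ 2) * (F w - (c + w) / (c - w)) := by
  set Φ : ℂ → ℂ := fun ζ => I * (P ζ - (ζ - c) * F w) * (P ζ * F w - (ζ - c)) -
    I * ((ζ + w) / (ζ - w)) * (P ζ - (ζ - c) * F w) ^ 2 with hΦ
  have hne : ∀ ζ ∈ closedBall c r, ζ - w ≠ 0 := fun ζ hζ =>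
    sub_ne_zero.2 fun h => hw (h ▸ hζ)
  have hΦdiff : DifferentiableOn ℂ Φ (closedBall c r) := by
    intro ζ hζ
    have := hne ζ hζ
    have := hP ζ hζ
    fun_prop (disch := assumption)
  have hEq : Set.EqOn (fun ζ => (ζ - c) * G ζ w) (fun ζ => (ζ - c)⁻¹ • Φ ζ) (sphere c r) := by
    intro ζ hζ
    have hζc : ζ - c ≠ 0 := sub_ne_zero.2 (ne_of_mem_sphere hζ hr.ne')
    have hζw := hne ζ (sphere_subset_closedBall hζ)
    have hF : F ζ = P ζ / (ζ - c) := by rw [← hFP ζ hζ]; field_simp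
    simp only [hG, hΦ, hF, smul_eq_mul]
    field_simp
  rw [circleIntegral.integral_congr hr.le hEq, hΦdiff.circleIntegral_sub_inv_smul
    (mem_ball_self hr), smul_eq_mul, hΦ]
  simp only [sub_self, zero_mul, sub_zero]
  ring

theorem circleIntegral_sub_mul_const_mul_sub_eq_zero {F P k : ℂ → ℂ} {c : ℂ} {r : ℝ}
    (hr : 0 ≤ r) (hP : DifferentiableOn ℂ P (closedBall c r))
    (hFP : ∀ ζ ∈ sphere c r, (ζ - c) * F ζ = P ζ) (hk : DifferentiableOn ℂ k (closedBall c r))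
    (A : ℂ) : ∮ ζ in C(c, r), (ζ - c) * (A * (F ζ - k ζ)) = 0 := by
  have hEq : Set.EqOn (fun ζ => (ζ - c) * (A * (F ζ - k ζ)))
      (fun ζ => A * (P ζ - (ζ - c) * k ζ)) (sphere c r) := fun ζ hζ => by
    simp only [← hFP ζ hζ]
    ring
  have hdiff : DifferentiableOn ℂ (fun ζ => A * (P ζ - (ζ - c) * k ζ)) (closedBall c r) :=
    (hP.sub ((differentiableOn_id.sub_const c).mul hk)).const_mul A
  rw [circleIntegral.integral_congr hr hEq]
  exact (hdiff.mono closure_ball_subset_closedBall).diffContOnCl.circleIntegral_eq_zero hr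

theorem statement6_general (n : ℕ) (z : Fin n → ℂ) (μ : Fin n → ℝ)
    (F : ℂ → ℂ) (hF : ∀ ζ, F ζ = ∑ j, (μ j : ℂ) * (z j + ζ) / (z j - ζ))
    (G : ℂ → ℂ → ℂ)
    (hG : ∀ ζ ω, G ζ ω = Complex.I * (F ζ - F ω) * (F ζ * F ω - 1) -
      Complex.I * ((ζ + ω) / (ζ - ω)) * (F ζ - F ω) ^ 2)
    (s t : Fin n) (δ ε : ℝ) (hδ : 0 < δ) (hε : 0 < ε)
    (hdisj : Disjoint (closedBall (z s) δ) (closedBall (z t) ε))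
    (hone_s : ∀ j, z j ∈ closedBall (z s) δ ↔ j = s)
    (hone_t : ∀ j, z j ∈ closedBall (z t) ε ↔ j = t) :
    (1 / (2 * (Real.pi : ℂ) * Complex.I)) ^ 2 *
      (∮ w in C(z t, ε), ∮ ζ in C(z s, δ), (ζ - z s) * (w - z t) * G ζ w) = 0 := by
  obtain ⟨Ps, hPs_diff, hPs⟩ := exists_differentiableAt_sub_mul_sum_eq (μ · : Fin n → ℂ) z s
  obtain ⟨Pt, hPt_diff, hPt⟩ := exists_differentiableAt_sub_mul_sum_eq (μ · : Fin n → ℂ) z t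
  have hPs_on : DifferentiableOn ℂ Ps (closedBall (z s) δ) := fun ζ hζ =>
    (hPs_diff ζ fun j hj h => hj ((hone_s j).1 (h ▸ hζ))).differentiableWithinAt
  have hPt_on : DifferentiableOn ℂ Pt (closedBall (z t) ε) := fun ζ hζ =>
    (hPt_diff ζ fun j hj h => hj ((hone_t j).1 (h ▸ hζ))).differentiableWithinAt
  have hzs : z s ∉ closedBall (z t) ε := Set.disjoint_left.1 hdisj (mem_closedBall_self hδ.le)
  have hk : DifferentiableOn ℂ (fun w => (z s + w) / (z s - w)) (closedBall (z t) ε) :=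
    fun w hw => by
      have : z s - w ≠ 0 := sub_ne_zero.2 fun h => hzs (h ▸ hw)
      fun_prop (disch := exact this)
  have hinner : Set.EqOn (fun w => ∮ ζ in C(z s, δ), (ζ - z s) * (w - z t) * G ζ w)
      (fun w => (w - z t) *
        (2 * π * I * (I * Ps (z s) ^ 2) * (F w - (z s + w) / (z s - w)))) (sphere (z t) ε) :=
    fun w hw => by
      have hcomm : (fun ζ => (ζ - z s) * (w - z t) * G ζ w) =
          fun ζ => (w - z t) * ((ζ - z s) * G ζ w) := funext fun ζ => by ring
      dsimp only
      rw [hcomm, circleIntegral.integral_const_mul, circleIntegral_sub_mul_bracket_eq hG hδ hPs_on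
        (fun ζ hζ => by rw [hF]; exact hPs ζ (ne_of_mem_sphere hζ hδ.ne'))
        fun hw' => Set.disjoint_left.1 hdisj hw' (sphere_subset_closedBall hw)]
  rw [circleIntegral.integral_congr hε.le hinner,
    circleIntegral_sub_mul_const_mul_sub_eq_zero hε.le hPt_on
      (fun w hw => by rw [hF]; exact hPt w (ne_of_mem_sphere hw hε.ne')) hk, mul_zero]

/-- For the Carathéodory function `F` of a probability measure supported
at `n ≥ 2` distinct points of the unit circle, and
`G(z,w) = i(F(z)−F(w))(F(z)F(w)−1) − i((z+w)/(z−w))(F(z)−F(w))²` the Gelfand–Dikij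
bracket `{F(z),F(w)}_GD`, the double residue extracting `{z_s,z_t}` vanishes for `s ≠ t`:
`(1/(2πi)²) ∮_{|w−z_t|=ε} ∮_{|z−z_s|=δ} (z−z_s)(w−z_t) G(z,w) dz dw = 0`. -/
theorem statement6 (n : ℕ) (hn : 2 ≤ n) (z : Fin n → ℂ) (μ : Fin n → ℝ)
    (hz : ∀ j, ‖z j‖ = 1) (hinj : Function.Injective z)
    (hμ : ∀ j, μ j ∈ Set.Ioo (0 : ℝ) 1) (hsum : ∑ j, μ j = 1)
    (F : ℂ → ℂ) (hF : ∀ ζ, F ζ = ∑ j, (μ j : ℂ) * (z j + ζ) / (z j - ζ))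
    (G : ℂ → ℂ → ℂ)
    (hG : ∀ ζ ω, G ζ ω = Complex.I * (F ζ - F ω) * (F ζ * F ω - 1) -
      Complex.I * ((ζ + ω) / (ζ - ω)) * (F ζ - F ω) ^ 2)
    (s t : Fin n) (hst : s ≠ t) (δ ε : ℝ) (hδ : 0 < δ) (hε : 0 < ε)
    (hdisj : Disjoint (closedBall (z s) δ) (closedBall (z t) ε))
    (hone_s : ∀ j, z j ∈ closedBall (z s) δ ↔ j = s)
    (hone_t : ∀ j, z j ∈ closedBall (z t) ε ↔ j = t) :
    (1 / (2 * (Real.pi : ℂ) * Complex.I)) ^ 2 *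
      (∮ w in C(z t, ε), ∮ ζ in C(z s, δ), (ζ - z s) * (w - z t) * G ζ w) = 0 :=
  statement6_general n z μ F hF G hG s t δ ε hδ hε hdisj hone_s hone_t
end

section
/- Let n ≥ 1, let z₁,…,z_n be distinct points on the unit circle in ℂ, and let μ₁,…,μ_n ∈ (0,1) with μ₁+⋯+μ_n = 1. Define F(z) := Σ_{j=1}^n μ_j (z_j+z)/(z_j−z) and G(z,w) := i(F(z)−F(w))(F(z)F(w)−1) − i((z+w)/(z−w))(F(z)−F(w))². Let 1 ≤ s, t ≤ n and let δ, ε > 0 be small enough that each closed disk (radius δ around z_s for the z-variable, radius ε around z_t for the w-variable) contains exactly one of the points z₁,…,z_n; if s ≠ t assume the two closed disks are disjoint, and if s = t assume δ < ε (nested contours, integrating in z over the inner circle first). Then (1/(2πi)²) ∮_{|w−z_t|=ε} ∮_{|z−z_s|=δ} (z−z_s) G(z,w) dz dw = 8i z_s² z_t μ_s μ_t (δ_{st} − μ_s), where δ_{st} is the Kronecker delta. Equivalently, {z_s, μ_t} = 2i z_s μ_t (δ_{st} − μ_s). -/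
/-!
Near a pole `p = z k` the Carathéodory function is `F ζ = Φ ζ / (ζ - p)` with `Φ` holomorphic and
`Φ p = -2 μ_k z_k`. Substituting this into `G` shows that `(ζ - p) G(ζ, w)` is again of the form
`φ_w ζ / (ζ - p)` with `φ_w` holomorphic on the inner disk, so Cauchy's integral formula evaluates
the inner integral as `2πi φ_w(p) = 2πi · i Φ(p)² (F w - (p + w) / (p - w))`. The outer integral
then picks up the residue of `F` at `z_t` and, when `s = t`, the residue `2 z_s` of the kernel
`-(z_s + w) / (z_s - w)`.
-/

open Complex Metric Finset

theorem circleIntegral_eq_of_eqOn_div_sub {f φ : ℂ → ℂ} {c p : ℂ} {R : ℝ} (hp : p ∈ ball c R)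
    (hφ : DifferentiableOn ℂ φ (closedBall c R)) (hf : ∀ ζ ∈ sphere c R, f ζ = φ ζ / (ζ - p)) :
    ∮ ζ in C(c, R), f ζ = 2 * Real.pi * I * φ p := by
  have hR : 0 ≤ R := dist_nonneg.trans (mem_ball.1 hp).le
  rw [circleIntegral.integral_congr hR hf]
  exact circleIntegral_div_sub_of_differentiable_on_off_countable Set.countable_empty hp
    hφ.continuousOn fun ζ hζ => hφ.differentiableAt (closedBall_mem_nhds_of_mem hζ.1)

section PoleNumerator

variable {ι : Type*} [Fintype ι] [DecidableEq ι] (c z : ι → ℂ)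

/-- `(ζ - z k) * ∑ j, c j * (z j + ζ) / (z j - ζ)`, continued holomorphically across `z k`. -/
noncomputable def poleNumerator (k : ι) (ζ : ℂ) : ℂ :=
  -(c k * (z k + ζ)) + (ζ - z k) * ∑ j ∈ univ.erase k, c j * (z j + ζ) / (z j - ζ)

theorem sum_eq_poleNumerator_div {k : ι} {ζ : ℂ} (hζ : ζ ≠ z k) :
    ∑ j, c j * (z j + ζ) / (z j - ζ) = poleNumerator c z k ζ / (ζ - z k) := by
  have h₁ : ζ - z k ≠ 0 := sub_ne_zero.2 hζ
  have h₂ : z k - ζ ≠ 0 := sub_ne_zero.2 hζ.symm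
  rw [poleNumerator, ← add_sum_erase _ _ (mem_univ k)]
  field_simp
  ring

theorem poleNumerator_self (k : ι) : poleNumerator c z k (z k) = -2 * c k * z k := by
  simp only [poleNumerator, sub_self, zero_mul, add_zero]
  ring

theorem differentiableOn_poleNumerator {k : ι} {U : Set ℂ} (hU : ∀ j ≠ k, z j ∉ U) :
    DifferentiableOn ℂ (poleNumerator c z k) U := by
  have hsum : DifferentiableOn ℂ (fun ζ => ∑ j ∈ univ.erase k, c j * (z j + ζ) / (z j - ζ)) U :=
    DifferentiableOn.fun_sum fun j hj => by
      have hne : ∀ ζ ∈ U, z j - ζ ≠ 0 := fun ζ hζ =>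
        sub_ne_zero.2 fun h => hU j (ne_of_mem_erase hj) (h ▸ hζ)
      fun_prop (disch := assumption)
  unfold poleNumerator
  fun_prop

end PoleNumerator

/-- The Gelfand–Dikij bracket `{F ζ, F ω}_GD`. -/
noncomputable def gdBracket (F : ℂ → ℂ) (ζ ω : ℂ) : ℂ :=
  I * (F ζ - F ω) * (F ζ * F ω - 1) - I * ((ζ + ω) / (ζ - ω)) * (F ζ - F ω) ^ 2

section Residues

variable {F Φ : ℂ → ℂ} {p : ℂ} {R : ℝ}

theorem circleIntegral_sub_mul_gdBracket (hR : 0 < R) (hΦ : DifferentiableOn ℂ Φ (closedBall p R))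
    (hF : ∀ ζ ∈ sphere p R, F ζ = Φ ζ / (ζ - p)) {w : ℂ} (hw : w ∉ closedBall p R) :
    ∮ ζ in C(p, R), (ζ - p) * gdBracket F ζ w =
      2 * Real.pi * I * (I * Φ p ^ 2) * (F w - (p + w) / (p - w)) := by
  have hζw : ∀ ζ ∈ closedBall p R, ζ - w ≠ 0 := fun ζ hζ =>
    sub_ne_zero.2 fun h => hw (h ▸ hζ)
  rw [circleIntegral_eq_of_eqOn_div_sub (mem_ball_self hR) (φ := fun ζ =>
    I * (Φ ζ - (ζ - p) * F w) * (Φ ζ * F w - (ζ - p)) -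
      I * ((ζ + w) / (ζ - w)) * (Φ ζ - (ζ - p) * F w) ^ 2)]
  · simp only [sub_self, zero_mul, sub_zero]
    ring
  · fun_prop (disch := assumption)
  · intro ζ hζ
    have h₁ : ζ - p ≠ 0 := sub_ne_zero.2 (ne_of_mem_sphere hζ hR.ne')
    have h₂ : ζ - w ≠ 0 := hζw ζ (sphere_subset_closedBall hζ)
    rw [gdBracket, hF ζ hζ]
    field_simp

theorem circleIntegral_sub_herglotz_self (hR : 0 < R) (hΦ : DifferentiableOn ℂ Φ (closedBall p R))
    (hF : ∀ w ∈ sphere p R, F w = Φ w / (w - p)) :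
    ∮ w in C(p, R), (F w - (p + w) / (p - w)) = 2 * Real.pi * I * (Φ p + 2 * p) := by
  rw [circleIntegral_eq_of_eqOn_div_sub (mem_ball_self hR) (φ := fun w => Φ w + (p + w))]
  · ring
  · fun_prop
  · intro w hw
    have h₁ : w - p ≠ 0 := sub_ne_zero.2 (ne_of_mem_sphere hw hR.ne')
    have h₂ : p - w ≠ 0 := fun h => h₁ (by linear_combination -h)
    rw [hF w hw]
    field_simp
    ring

theorem circleIntegral_sub_herglotz_of_notMem (hR : 0 < R)
    (hΦ : DifferentiableOn ℂ Φ (closedBall p R)) (hF : ∀ w ∈ sphere p R, F w = Φ w / (w - p))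
    {q : ℂ} (hq : q ∉ closedBall p R) :
    ∮ w in C(p, R), (F w - (q + w) / (q - w)) = 2 * Real.pi * I * Φ p := by
  have hqw : ∀ w ∈ closedBall p R, q - w ≠ 0 := fun w hw =>
    sub_ne_zero.2 fun h => hq (h ▸ hw)
  rw [circleIntegral_eq_of_eqOn_div_sub (mem_ball_self hR)
    (φ := fun w => Φ w - (w - p) * ((q + w) / (q - w)))]
  · simp only [sub_self, zero_mul, sub_zero]
  · fun_prop (disch := assumption)
  · intro w hw
    have h₁ : w - p ≠ 0 := sub_ne_zero.2 (ne_of_mem_sphere hw hR.ne')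
    have h₂ : q - w ≠ 0 := hqw w (sphere_subset_closedBall hw)
    rw [hF w hw]
    field_simp

end Residues

theorem statement7_general (n : ℕ) (z : Fin n → ℂ) (μ : Fin n → ℝ)
    (F : ℂ → ℂ) (hF : ∀ ζ, F ζ = ∑ j, (μ j : ℂ) * (z j + ζ) / (z j - ζ))
    (G : ℂ → ℂ → ℂ)
    (hG : ∀ ζ ω, G ζ ω = Complex.I * (F ζ - F ω) * (F ζ * F ω - 1) -
      Complex.I * ((ζ + ω) / (ζ - ω)) * (F ζ - F ω) ^ 2)
    (s t : Fin n) (δ ε : ℝ) (hδ : 0 < δ) (hε : 0 < ε)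
    (hone_s : ∀ j, z j ∈ closedBall (z s) δ ↔ j = s)
    (hone_t : ∀ j, z j ∈ closedBall (z t) ε ↔ j = t)
    (hdisj : s ≠ t → Disjoint (closedBall (z s) δ) (closedBall (z t) ε))
    (hnest : s = t → δ < ε) :
    (1 / (2 * (Real.pi : ℂ) * Complex.I)) ^ 2 *
      (∮ w in C(z t, ε), ∮ ζ in C(z s, δ), (ζ - z s) * G ζ w) =
    8 * Complex.I * (z s) ^ 2 * z t * (μ s : ℂ) * (μ t : ℂ) *
      ((if s = t then 1 else 0) - (μ s : ℂ)) := by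
  set c : Fin n → ℂ := fun j => (μ j : ℂ)
  have hGF : G = gdBracket F := funext fun ζ => funext (hG ζ)
  have hpole : ∀ k {r : ℝ}, 0 < r → ∀ ζ ∈ sphere (z k) r,
      F ζ = poleNumerator c z k ζ / (ζ - z k) := fun k r hr ζ hζ =>
    (hF ζ).trans (sum_eq_poleNumerator_div c z (ne_of_mem_sphere hζ hr.ne'))
  have hΦ : ∀ k {r : ℝ}, (∀ j, z j ∈ closedBall (z k) r ↔ j = k) →
      DifferentiableOn ℂ (poleNumerator c z k) (closedBall (z k) r) := fun k r h =>
    differentiableOn_poleNumerator c z fun j hj hmem => hj ((h j).1 hmem)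
  have houter : ∀ w ∈ sphere (z t) ε, w ∉ closedBall (z s) δ := by
    intro w hw hws
    rcases eq_or_ne s t with rfl | hst
    · rw [mem_closedBall, mem_sphere.1 hw] at hws
      exact (hnest rfl).not_ge hws
    · exact Set.disjoint_left.1 (hdisj hst) hws (sphere_subset_closedBall hw)
  rw [circleIntegral.integral_congr hε.le fun w hw => hGF ▸
    circleIntegral_sub_mul_gdBracket hδ (hΦ s hone_s) (hpole s hδ) (houter w hw),
    circleIntegral.integral_const_mul]
  have hπ : (Real.pi : ℂ) ≠ 0 := ofReal_ne_zero.2 Real.pi_ne_zero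
  rcases eq_or_ne s t with rfl | hst
  · rw [circleIntegral_sub_herglotz_self hε (hΦ s hone_t) (hpole s hε), poleNumerator_self,
      if_pos rfl]
    field_simp
    ring
  · have hzs : z s ∉ closedBall (z t) ε := fun h => hst ((hone_t s).1 h)
    rw [circleIntegral_sub_herglotz_of_notMem hε (hΦ t hone_t) (hpole t hε) hzs,
      poleNumerator_self, poleNumerator_self, if_neg hst]
    field_simp
    ring

/-- For the Carathéodory function `F` of a probability measure supported
at `n` distinct points of the unit circle, and
`G(z,w) = i(F(z)−F(w))(F(z)F(w)−1) − i((z+w)/(z−w))(F(z)−F(w))²` the Gelfand–Dikij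
bracket `{F(z),F(w)}_GD`, the double residue extracting `{z_s,μ_t}` gives
`(1/(2πi)²) ∮_{|w−z_t|=ε} ∮_{|z−z_s|=δ} (z−z_s) G(z,w) dz dw
  = 8i z_s² z_t μ_s μ_t (δ_{st} − μ_s)`,
i.e. `{z_s, μ_t} = 2i z_s μ_t (δ_{st} − μ_s)`. -/
theorem statement7 (n : ℕ) (hn : 1 ≤ n) (z : Fin n → ℂ) (μ : Fin n → ℝ)
    (hz : ∀ j, ‖z j‖ = 1) (hinj : Function.Injective z)
    (hμ : ∀ j, μ j ∈ Set.Ioo (0 : ℝ) 1) (hsum : ∑ j, μ j = 1)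
    (F : ℂ → ℂ) (hF : ∀ ζ, F ζ = ∑ j, (μ j : ℂ) * (z j + ζ) / (z j - ζ))
    (G : ℂ → ℂ → ℂ)
    (hG : ∀ ζ ω, G ζ ω = Complex.I * (F ζ - F ω) * (F ζ * F ω - 1) -
      Complex.I * ((ζ + ω) / (ζ - ω)) * (F ζ - F ω) ^ 2)
    (s t : Fin n) (δ ε : ℝ) (hδ : 0 < δ) (hε : 0 < ε)
    (hone_s : ∀ j, z j ∈ closedBall (z s) δ ↔ j = s)
    (hone_t : ∀ j, z j ∈ closedBall (z t) ε ↔ j = t)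
    (hdisj : s ≠ t → Disjoint (closedBall (z s) δ) (closedBall (z t) ε))
    (hnest : s = t → δ < ε) :
    (1 / (2 * (Real.pi : ℂ) * Complex.I)) ^ 2 *
      (∮ w in C(z t, ε), ∮ ζ in C(z s, δ), (ζ - z s) * G ζ w) =
    8 * Complex.I * (z s) ^ 2 * z t * (μ s : ℂ) * (μ t : ℂ) *
      ((if s = t then 1 else 0) - (μ s : ℂ)) :=
  statement7_general n z μ F hF G hG s t δ ε hδ hε hone_s hone_t hdisj hnest
end

section
/- Let n ≥ 1 and let U := {(θ₁,…,θ_n, m₁,…,m_n) ∈ ℝⁿ × ℝⁿ : m_j > 0 for all j, and θ_s − θ_t ∉ 2πℤ for all s ≠ t}, with the bracket {f,g} := Σ_{s} 2 m_s (∂f/∂θ_s ∂g/∂m_s − ∂f/∂m_s ∂g/∂θ_s) + Σ_{s<t} 2 m_s m_t cot((θ_s−θ_t)/2) (∂f/∂m_s ∂g/∂m_t − ∂f/∂m_t ∂g/∂m_s). For 1 ≤ s ≤ n define q_s : U → ℝ by q_s := m_s · Π_{j≠s} |e^{iθ_s} − e^{iθ_j}|. Then for all 1 ≤ s, t ≤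 n: {θ_s, q_t} = 2 q_t δ_{st} and {q_s, q_t} = 0. In particular, θ₁,…,θ_n, (1/2)log q₁,…,(1/2)log q_n are canonical coordinates for this Poisson structure. -/
/-!
The chord `|e^{ia} - e^{ib}| = |2 sin((a - b)/2)|` has logarithmic derivative `cot((a - b)/2)/2`
in `a`. Hence `q_t = m_t A_t(θ)` (`A_t = chordProd t`) with `∂q_t/∂m_r = δ_{tr} A_t` and, for `r ≠ t`,
`∂q_t/∂θ_r = -q_t cot((θ_t - θ_r)/2)/2`. Since both the cotangent kernel and the `m`-part of the
bracket are antisymmetric in `(s, t)`, the sum over `s < t` is the full double sum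
`Σ_{s,t} 2 m_s m_t cot((θ_s - θ_t)/2) ∂f/∂m_s ∂g/∂m_t`. For `f = q_s`, `g = q_t` with `s ≠ t` only
the `(s, t)` entry survives, and it cancels the two terms `∂q_s/∂θ_t`, `∂q_t/∂θ_s` of the first sum.
-/

open Real

/-- Partial derivative in the `θ_s` direction. -/
noncomputable def pTheta {n : ℕ} (f : (Fin n → ℝ) × (Fin n → ℝ) → ℝ) (s : Fin n)
    (p : (Fin n → ℝ) × (Fin n → ℝ)) : ℝ :=
  fderiv ℝ f p (Pi.single s 1, 0)

/-- Partial derivative in the `m_s` direction. -/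
noncomputable def pM {n : ℕ} (f : (Fin n → ℝ) × (Fin n → ℝ) → ℝ) (s : Fin n)
    (p : (Fin n → ℝ) × (Fin n → ℝ)) : ℝ :=
  fderiv ℝ f p (0, Pi.single s 1)

/-- The extended Poisson bracket on finite measures `Σ m_j δ_{exp(iθ_j)}`. -/
noncomputable def pbr {n : ℕ} (f g : (Fin n → ℝ) × (Fin n → ℝ) → ℝ)
    (p : (Fin n → ℝ) × (Fin n → ℝ)) : ℝ :=
  (∑ s, 2 * p.2 s * (pTheta f s p * pM g s p - pM f s p * pTheta g s p)) +
  ∑ s, ∑ t, if s < t then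
    2 * p.2 s * p.2 t * Real.cot ((p.1 s - p.1 t) / 2) *
      (pM f s p * pM g t p - pM f t p * pM g s p)
  else 0

/-- The phase space: all weights positive, all angles distinct mod `2π`. -/
def U (n : ℕ) : Set ((Fin n → ℝ) × (Fin n → ℝ)) :=
  {p | (∀ j, 0 < p.2 j) ∧
    ∀ s t : Fin n, s ≠ t → ∀ k : ℤ, p.1 s - p.1 t ≠ 2 * Real.pi * k}

/-- The canonical weight `q_s = m_s · Π_{j≠s} |exp(iθ_s) − exp(iθ_j)|`. -/
noncomputable def qCoord {n : ℕ} (s : Fin n) (p : (Fin n → ℝ) × (Fin n → ℝ)) : ℝ :=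
  p.2 s * ∏ j ∈ Finset.univ.erase s,
    ‖Complex.exp ((p.1 s : ℂ) * Complex.I) -
      Complex.exp ((p.1 j : ℂ) * Complex.I)‖

open Finset

theorem Real.cot_neg (x : ℝ) : cot (-x) = -cot x := by
  rw [cot_eq_cos_div_sin, cot_eq_cos_div_sin, cos_neg, sin_neg, div_neg]

noncomputable def chord (u : ℝ) : ℝ := |2 * sin (u / 2)|

theorem norm_exp_mul_I_sub_exp_mul_I (a b : ℝ) :
    ‖Complex.exp (a * Complex.I) - Complex.exp (b * Complex.I)‖ = chord (a - b) := by
  have hfactor : Complex.exp (a * Complex.I) - Complex.exp (b * Complex.I) =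
      Complex.exp (b * Complex.I) * (Complex.exp (Complex.I * ↑(a - b)) - 1) := by
    rw [mul_sub, ← Complex.exp_add, mul_one]
    push_cast
    ring_nf
  rw [hfactor, norm_mul, Complex.norm_exp_ofReal_mul_I, one_mul,
    Complex.norm_exp_I_mul_ofReal_sub_one, Real.norm_eq_abs, chord]

theorem hasDerivAt_chord {u : ℝ} (hu : sin (u / 2) ≠ 0) :
    HasDerivAt chord (cot (u / 2) / 2 * chord u) u := by
  have h := (hasDerivAt_abs (mul_ne_zero two_ne_zero hu)).comp u
    (((hasDerivAt_id u).div_const 2).sin.const_mul 2)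
  refine h.congr_deriv ?_
  rw [chord, cot_eq_cos_div_sin, id]
  rcases hu.lt_or_gt with hneg | hpos
  · rw [abs_of_neg (by linarith), sign_neg (by linarith)]
    field_simp
    simp
  · rw [abs_of_pos (by linarith), sign_pos (by linarith)]
    field_simp
    simp

theorem sin_half_ne_zero_of_ne_two_pi_mul {u : ℝ} (h : ∀ k : ℤ, u ≠ 2 * π * k) :
    sin (u / 2) ≠ 0 := by
  rw [Ne, Real.sin_eq_zero_iff]
  rintro ⟨k, hk⟩
  exact h k (by linarith)

section ChordProduct

variable {n : ℕ}

noncomputable def chordProd (t : Fin n) (θ : Fin n → ℝ) : ℝ :=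
  ∏ j ∈ univ.erase t, chord (θ t - θ j)

theorem qCoord_eq_mul_chordProd (t : Fin n) :
    qCoord t = fun p => p.2 t * chordProd t p.1 := by
  ext p
  simp only [qCoord, chordProd, norm_exp_mul_I_sub_exp_mul_I]

theorem hasFDerivAt_chordProd {t : Fin n} {θ : Fin n → ℝ}
    (hθ : ∀ j ≠ t, sin ((θ t - θ j) / 2) ≠ 0) :
    HasFDerivAt (chordProd t)
      (∑ j ∈ univ.erase t, (∏ k ∈ (univ.erase t).erase j, chord (θ t - θ k)) •
        (cot ((θ t - θ j) / 2) / 2 * chord (θ t - θ j)) •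
          (ContinuousLinearMap.proj (R := ℝ) (φ := fun _ : Fin n => ℝ) t -
            ContinuousLinearMap.proj j)) θ := by
  refine HasFDerivAt.finsetProd fun j hj => ?_
  have hdiff : HasFDerivAt (fun θ : Fin n → ℝ => θ t - θ j)
      (ContinuousLinearMap.proj t - ContinuousLinearMap.proj j) θ :=
    (hasFDerivAt_apply (𝕜 := ℝ) t θ).fun_sub (hasFDerivAt_apply j θ)
  exact (hasDerivAt_chord (hθ j (ne_of_mem_erase hj))).comp_hasFDerivAt (h₂ := chord) θ hdiff

theorem fderiv_chordProd_single {t r : Fin n} {θ : Fin n → ℝ}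
    (hθ : ∀ j ≠ t, sin ((θ t - θ j) / 2) ≠ 0) (hr : r ≠ t) :
    fderiv ℝ (chordProd t) θ (Pi.single r 1) = -(cot ((θ t - θ r) / 2) / 2 * chordProd t θ) := by
  rw [(hasFDerivAt_chordProd hθ).fderiv, chordProd,
    ← prod_erase_mul _ _ (mem_erase.2 ⟨hr, mem_univ r⟩)]
  simp [Pi.single_apply, hr.symm, mul_comm, mul_left_comm, mul_assoc]

end ChordProduct

section PartialDerivatives

variable {n : ℕ}

theorem hasFDerivAt_fst_apply (s : Fin n) (p : (Fin n → ℝ) × (Fin n → ℝ)) :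
    HasFDerivAt (fun x : (Fin n → ℝ) × (Fin n → ℝ) => x.1 s)
      ((ContinuousLinearMap.proj s).comp (ContinuousLinearMap.fst ℝ _ _)) p :=
  (hasFDerivAt_apply (𝕜 := ℝ) s p.1).comp p hasFDerivAt_fst

theorem pTheta_fst_apply (s r : Fin n) (p : (Fin n → ℝ) × (Fin n → ℝ)) :
    pTheta (fun x => x.1 s) r p = (Pi.single s 1 : Fin n → ℝ) r := by
  rw [pTheta, (hasFDerivAt_fst_apply s p).fderiv]
  simp [Pi.single_apply, eq_comm]

theorem pM_fst_apply (s r : Fin n) (p : (Fin n → ℝ) × (Fin n → ℝ)) :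
    pM (fun x => x.1 s) r p = 0 := by
  rw [pM, (hasFDerivAt_fst_apply s p).fderiv]
  simp

theorem hasFDerivAt_snd_apply_mul {g : (Fin n → ℝ) → ℝ} {g' : (Fin n → ℝ) →L[ℝ] ℝ}
    {p : (Fin n → ℝ) × (Fin n → ℝ)} (hg : HasFDerivAt g g' p.1) (t : Fin n) :
    HasFDerivAt (fun x : (Fin n → ℝ) × (Fin n → ℝ) => x.2 t * g x.1)
      (p.2 t • g'.comp (ContinuousLinearMap.fst ℝ _ _) +
        g p.1 • (ContinuousLinearMap.proj t).comp (ContinuousLinearMap.snd ℝ _ _)) p := by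
  have hm : HasFDerivAt (fun x : (Fin n → ℝ) × (Fin n → ℝ) => x.2 t)
      ((ContinuousLinearMap.proj t).comp (ContinuousLinearMap.snd ℝ _ _)) p :=
    (hasFDerivAt_apply (𝕜 := ℝ) t p.2).comp p hasFDerivAt_snd
  exact hm.mul (hg.comp p hasFDerivAt_fst)

theorem pTheta_snd_apply_mul {g : (Fin n → ℝ) → ℝ} {p : (Fin n → ℝ) × (Fin n → ℝ)}
    (hg : DifferentiableAt ℝ g p.1) (t r : Fin n) :
    pTheta (fun x => x.2 t * g x.1) r p = p.2 t * fderiv ℝ g p.1 (Pi.single r 1) := by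
  rw [pTheta, (hasFDerivAt_snd_apply_mul hg.hasFDerivAt t).fderiv]
  simp

theorem pM_snd_apply_mul {g : (Fin n → ℝ) → ℝ} {p : (Fin n → ℝ) × (Fin n → ℝ)}
    (hg : DifferentiableAt ℝ g p.1) (t r : Fin n) :
    pM (fun x => x.2 t * g x.1) r p = (Pi.single t (g p.1) : Fin n → ℝ) r := by
  rw [pM, (hasFDerivAt_snd_apply_mul hg.hasFDerivAt t).fderiv]
  simp [Pi.single_apply, eq_comm]

end PartialDerivatives

theorem sum_sum_ite_lt_mul_sub {ι R : Type*} [Fintype ι] [LinearOrder ι] [CommRing R]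
    [NoZeroDivisors R] [CharZero R] (K : ι → ι → R) (hK : ∀ s t, K t s = -K s t) (F G : ι → R) :
    ∑ s, ∑ t, (if s < t then K s t * (F s * G t - F t * G s) else 0) =
      ∑ s, ∑ t, K s t * F s * G t := by
  have hdiag : ∀ s, K s s = 0 := fun s => self_eq_neg.mp (hK s s)
  symm
  calc ∑ s, ∑ t, K s t * F s * G t
      = ∑ s, ∑ t, ((if s < t then K s t * F s * G t else 0) +
          (if t < s then K s t * F s * G t else 0)) := by
        refine sum_congr rfl fun s _ => sum_congr rfl fun t _ => ?_
        rcases lt_trichotomy s t with h | rfl | h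
        · simp [h, h.not_gt]
        · simp [hdiag]
        · simp [h, h.not_gt]
    _ = ∑ s, ∑ t, ((if s < t then K s t * F s * G t else 0) +
          (if s < t then K t s * F t * G s else 0)) := by
        simp only [sum_add_distrib]
        rw [sum_comm (f := fun s t => if t < s then K s t * F s * G t else 0)]
    _ = ∑ s, ∑ t, (if s < t then K s t * (F s * G t - F t * G s) else 0) := by
        refine sum_congr rfl fun s _ => sum_congr rfl fun t _ => ?_
        split_ifs
        · rw [hK]; ring
        · simp

section Bracket

variable {n : ℕ}

theorem pbr_self (f : (Fin n → ℝ) × (Fin n → ℝ) → ℝ) (p : (Fin n → ℝ) × (Fin n → ℝ)) :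
    pbr f f p = 0 := by
  simp [pbr, mul_comm]

theorem pbr_eq_sum_sum (f g : (Fin n → ℝ) × (Fin n → ℝ) → ℝ) (p : (Fin n → ℝ) × (Fin n → ℝ)) :
    pbr f g p = ∑ s, 2 * p.2 s * (pTheta f s p * pM g s p - pM f s p * pTheta g s p) +
      ∑ s, ∑ t, 2 * p.2 s * p.2 t * cot ((p.1 s - p.1 t) / 2) * pM f s p * pM g t p := by
  rw [pbr, sum_sum_ite_lt_mul_sub (fun s t => 2 * p.2 s * p.2 t * cot ((p.1 s - p.1 t) / 2))]
  intro s t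
  rw [← neg_sub, neg_div, Real.cot_neg]
  ring

theorem pbr_of_pM_eq_single {f g : (Fin n → ℝ) × (Fin n → ℝ) → ℝ}
    {p : (Fin n → ℝ) × (Fin n → ℝ)} {s t : Fin n} {a b : ℝ}
    (hf : ∀ r, pM f r p = (Pi.single s a : Fin n → ℝ) r)
    (hg : ∀ r, pM g r p = (Pi.single t b : Fin n → ℝ) r) :
    pbr f g p = 2 * p.2 t * pTheta f t p * b - 2 * p.2 s * a * pTheta g s p +
      2 * p.2 s * p.2 t * cot ((p.1 s - p.1 t) / 2) * a * b := by
  simp only [pbr_eq_sum_sum, hf, hg, Pi.single_apply, mul_ite, mul_zero, ite_mul, zero_mul, mul_sub, sum_sub_distrib,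
    sum_ite_eq', mem_univ, if_true]
  ring

end Bracket

section PhaseSpace

variable {n : ℕ} {p : (Fin n → ℝ) × (Fin n → ℝ)}

theorem sin_half_sub_ne_zero_of_mem_U (hp : p ∈ U n) (t : Fin n) :
    ∀ j ≠ t, sin ((p.1 t - p.1 j) / 2) ≠ 0 :=
  fun j hj => sin_half_ne_zero_of_ne_two_pi_mul (hp.2 t j hj.symm)

theorem differentiableAt_chordProd_of_mem_U (hp : p ∈ U n) (t : Fin n) :
    DifferentiableAt ℝ (chordProd t) p.1 :=
  (hasFDerivAt_chordProd (sin_half_sub_ne_zero_of_mem_U hp t)).differentiableAt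

theorem pM_qCoord (hp : p ∈ U n) (t r : Fin n) :
    pM (qCoord t) r p = (Pi.single t (chordProd t p.1) : Fin n → ℝ) r := by
  rw [qCoord_eq_mul_chordProd]
  exact pM_snd_apply_mul (differentiableAt_chordProd_of_mem_U hp t) t r

theorem pTheta_qCoord_of_ne (hp : p ∈ U n) {t r : Fin n} (hr : r ≠ t) :
    pTheta (qCoord t) r p = -(p.2 t * (cot ((p.1 t - p.1 r) / 2) / 2 * chordProd t p.1)) := by
  rw [qCoord_eq_mul_chordProd, pTheta_snd_apply_mul (differentiableAt_chordProd_of_mem_U hp t),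
    fderiv_chordProd_single (sin_half_sub_ne_zero_of_mem_U hp t) hr, mul_neg]

end PhaseSpace

theorem statement10_general (n : ℕ) (s t : Fin n) :
    ∀ p ∈ U n,
      pbr (fun x => x.1 s) (qCoord t) p = 2 * qCoord t p * (if s = t then 1 else 0) ∧
      pbr (qCoord s) (qCoord t) p = 0 := by
  intro p hp
  have hpMθ : ∀ r, pM (fun x => x.1 s) r p = (Pi.single s 0 : Fin n → ℝ) r := fun r => by
    rw [pM_fst_apply, Pi.single_zero, Pi.zero_apply]
  refine ⟨?_, ?_⟩
  · rw [pbr_of_pM_eq_single hpMθ (pM_qCoord hp t), pTheta_fst_apply, qCoord_eq_mul_chordProd]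
    simp [Pi.single_apply, eq_comm, mul_assoc]
  · rcases eq_or_ne s t with rfl | hst
    · exact pbr_self _ _
    rw [pbr_of_pM_eq_single (pM_qCoord hp s) (pM_qCoord hp t), pTheta_qCoord_of_ne hp hst.symm,
      pTheta_qCoord_of_ne hp hst, ← neg_sub (p.1 s) (p.1 t), neg_div, Real.cot_neg]
    ring

/-- The functions `q_s = m_s Π_{j≠s}|e^{iθ_s} − e^{iθ_j}|` satisfy
`{θ_s, q_t} = 2 q_t δ_{st}` and `{q_s, q_t} = 0`; in particular
`θ_1,…,θ_n, (1/2)log q_1,…,(1/2)log q_n` are canonical coordinates. -/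
theorem statement10 (n : ℕ) (hn : 1 ≤ n) (s t : Fin n) :
    ∀ p ∈ U n,
      pbr (fun x => x.1 s) (qCoord t) p = 2 * qCoord t p * (if s = t then 1 else 0) ∧
      pbr (qCoord s) (qCoord t) p = 0 :=
  statement10_general n s t
end

section
/- Let n ≥ 1, let z₁,…,z_n be distinct points on the unit circle in ℂ, let μ̃₁,…,μ̃_n be positive reals, and let h₁,…,h_n be reals. For ζ ∈ ℂ \ {z₁,…,z_n} define F̃(ζ) := Σ_{j=1}^n μ̃_j (z_j+ζ)/(z_j−ζ) and F̃_h(ζ) := Σ_{j=1}^n h_j μ̃_j (z_j+ζ)/(z_j−ζ). Then for all z ≠ w in ℂ \ {z₁,…,z_n}: i(w−z) Σ_{j,k=1}^n ((z_j+z_k)(h_j+h_k)(z_j z_k + zw)) / ((z_j−z)(z_k−z)(z_j−w)(z_k−w)) · μ̃_j μ̃_k = i ((w+z)/(w−z)) (F̃(z)−F̃(w)) (F̃_h(z)−F̃_h(w)) − i F̃(0) (F̃_h(z)−F̃_h(w)) − i F̃_h(0) (F̃(z)−F̃(w)). -/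
open Complex

/-!
Put `D_j = (z_j + ζ)/(z_j - ζ) - (z_j + ω)/(z_j - ω)`. Since `F(0) = ∑ μ_j`, the right-hand side is
the bilinear form `∑_{j,k} μ_j ν_k ((ω + ζ)/(ω - ζ) D_j D_k - D_j - D_k)` in the weights `μ` and
`ν = h μ`. The left-hand side pairs `μ_j ν_k + ν_j μ_k` with a kernel symmetric in `j, k`, so it is
twice that kernel's form at `(μ, ν)`, and the two kernels agree by a rational identity in
`z_j, z_k, ζ, ω`.
-/

lemma Finset.sum_sum_mul_add_swap {ι R : Type*} [Fintype ι] [CommSemiring R]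
    (P : ι → ι → R) (hP : ∀ j k, P j k = P k j) (μ ν : ι → R) :
    ∑ j, ∑ k, P j k * (μ j * ν k + ν j * μ k) = 2 * ∑ j, ∑ k, P j k * (μ j * ν k) := by
  simp only [mul_add, Finset.sum_add_distrib]
  rw [Finset.sum_comm (f := fun j k => P j k * (ν j * μ k))]
  simp only [hP, mul_comm (ν _), two_mul]

section Caratheodory

variable {K ι : Type*} [Field K] [Fintype ι]

def herglotzKernel (a ζ : K) : K := (a + ζ) / (a - ζ)

def caratheodoryFun (z μ : ι → K) (ζ : K) : K := ∑ j, μ j * herglotzKernel (z j) ζ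

lemma herglotzKernel_zero {a : K} (ha : a ≠ 0) : herglotzKernel a 0 = 1 := by
  simp [herglotzKernel, ha]

lemma caratheodoryFun_zero {z : ι → K} (hz : ∀ j, z j ≠ 0) (μ : ι → K) :
    caratheodoryFun z μ 0 = ∑ j, μ j := by
  simp only [caratheodoryFun, herglotzKernel_zero (hz _), mul_one]

lemma caratheodoryFun_sub (z μ : ι → K) (ζ ω : K) :
    caratheodoryFun z μ ζ - caratheodoryFun z μ ω =
      ∑ j, μ j * (herglotzKernel (z j) ζ - herglotzKernel (z j) ω) := by
  simp only [caratheodoryFun, ← Finset.sum_sub_distrib, mul_sub]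

lemma herglotzKernel_pair {a b ζ ω : K} (hζω : ζ ≠ ω) (haζ : a ≠ ζ) (haω : a ≠ ω)
    (hbζ : b ≠ ζ) (hbω : b ≠ ω) :
    2 * (ω - ζ) * ((a + b) * (a * b + ζ * ω) / ((a - ζ) * (b - ζ) * (a - ω) * (b - ω))) =
      (ω + ζ) / (ω - ζ) * (herglotzKernel a ζ - herglotzKernel a ω) *
          (herglotzKernel b ζ - herglotzKernel b ω) -
        (herglotzKernel a ζ - herglotzKernel a ω) - (herglotzKernel b ζ - herglotzKernel b ω) := by
  have := sub_ne_zero.mpr hζω.symm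
  have := sub_ne_zero.mpr haζ
  have := sub_ne_zero.mpr haω
  have := sub_ne_zero.mpr hbζ
  have := sub_ne_zero.mpr hbω
  unfold herglotzKernel
  field_simp
  ring

theorem caratheodoryFun_bracket {z : ι → K} (hz : ∀ j, z j ≠ 0) (μ ν : ι → K) {ζ ω : K}
    (hζω : ζ ≠ ω) (hζ : ∀ j, z j ≠ ζ) (hω : ∀ j, z j ≠ ω) :
    (ω - ζ) * ∑ j, ∑ k, (z j + z k) * (z j * z k + ζ * ω) /
        ((z j - ζ) * (z k - ζ) * (z j - ω) * (z k - ω)) * (μ j * ν k + ν j * μ k) =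
      (ω + ζ) / (ω - ζ) * (caratheodoryFun z μ ζ - caratheodoryFun z μ ω) *
          (caratheodoryFun z ν ζ - caratheodoryFun z ν ω) -
        caratheodoryFun z μ 0 * (caratheodoryFun z ν ζ - caratheodoryFun z ν ω) -
        caratheodoryFun z ν 0 * (caratheodoryFun z μ ζ - caratheodoryFun z μ ω) := by
  set D : ι → K := fun j => herglotzKernel (z j) ζ - herglotzKernel (z j) ω
  rw [Finset.sum_sum_mul_add_swap _ (fun j k => by ring), Finset.mul_sum, Finset.mul_sum]
  calc _ = ∑ j, ∑ k, μ j * ν k * ((ω + ζ) / (ω - ζ) * D j * D k - D j - D k) := by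
        refine Finset.sum_congr rfl fun j _ => ?_
        rw [Finset.mul_sum, Finset.mul_sum]
        refine Finset.sum_congr rfl fun k _ => ?_
        rw [← herglotzKernel_pair hζω (hζ j) (hω j) (hζ k) (hω k)]
        ring
    _ = _ := by
        rw [caratheodoryFun_sub, caratheodoryFun_sub, caratheodoryFun_zero hz,
          caratheodoryFun_zero hz, mul_assoc, Finset.sum_mul_sum, Finset.sum_mul_sum,
          Finset.sum_mul_sum, Finset.sum_comm (γ := ι) (f := fun j k => ν j * (μ k * D k))]
        simp only [Finset.mul_sum, ← Finset.sum_sub_distrib]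
        refine Finset.sum_congr rfl fun j _ => Finset.sum_congr rfl fun k _ => ?_
        ring

end Caratheodory


theorem statement14_general (n : ℕ) (z : Fin n → ℂ) (μ h : Fin n → ℝ)
    (hz : ∀ j, ‖z j‖ = 1)
    (F Fh : ℂ → ℂ)
    (hF : ∀ ζ, F ζ = ∑ j, (μ j : ℂ) * (z j + ζ) / (z j - ζ))
    (hFh : ∀ ζ, Fh ζ = ∑ j, (h j : ℂ) * (μ j : ℂ) * (z j + ζ) / (z j - ζ)) :
    ∀ zz ww : ℂ, zz ≠ ww → (∀ j, zz ≠ z j) → (∀ j, ww ≠ z j) →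
      Complex.I * (ww - zz) *
        ∑ j, ∑ k, ((z j + z k) * ((h j : ℂ) + (h k : ℂ)) * (z j * z k + zz * ww)) /
          ((z j - zz) * (z k - zz) * (z j - ww) * (z k - ww)) *
          ((μ j : ℂ) * (μ k : ℂ)) =
      Complex.I * ((ww + zz) / (ww - zz)) * (F zz - F ww) * (Fh zz - Fh ww) -
        Complex.I * F 0 * (Fh zz - Fh ww) - Complex.I * Fh 0 * (F zz - F ww) := by
  intro zz ww hne hzz hww
  have hz0 : ∀ j, z j ≠ 0 := fun j => norm_ne_zero_iff.mp (by simp [hz j])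
  have hF' : F = caratheodoryFun z (fun j => (μ j : ℂ)) :=
    funext fun ζ => by simp only [hF, caratheodoryFun, herglotzKernel, mul_div_assoc]
  have hFh' : Fh = caratheodoryFun z (fun j => (h j : ℂ) * μ j) :=
    funext fun ζ => by simp only [hFh, caratheodoryFun, herglotzKernel, mul_div_assoc]
  have hweights : ∀ j k, ((z j + z k) * ((h j : ℂ) + h k) * (z j * z k + zz * ww)) /
      ((z j - zz) * (z k - zz) * (z j - ww) * (z k - ww)) * ((μ j : ℂ) * μ k) =
      (z j + z k) * (z j * z k + zz * ww) / ((z j - zz) * (z k - zz) * (z j - ww) * (z k - ww)) *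
        (μ j * (h k * μ k) + h j * μ j * μ k) := fun j k => by ring
  simp only [hweights, hF', hFh']
  linear_combination Complex.I * caratheodoryFun_bracket hz0 (fun j => (μ j : ℂ))
    (fun j => (h j : ℂ) * μ j) hne (fun j => (hzz j).symm) (fun j => (hww j).symm)

/-- For the Carathéodory function `F̃` of a finite unnormalized measure
`μ̃ = Σ μ̃_j δ_{z_j}` on the unit circle and its `h`-weighted analogue `F̃_h`, one has the
identity (the value of the `h`-bracket `{F̃(z), F̃(w)}_h`):
`i(w−z) Σ_{j,k} ((z_j+z_k)(h_j+h_k)(z_j z_k + zw))/((z_j−z)(z_k−z)(z_j−w)(z_k−w)) μ̃_j μ̃_k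
  = i((w+z)/(w−z))(F̃(z)−F̃(w))(F̃_h(z)−F̃_h(w)) − i F̃(0)(F̃_h(z)−F̃_h(w))
    − i F̃_h(0)(F̃(z)−F̃(w))`. -/
theorem statement14 (n : ℕ) (hn : 1 ≤ n) (z : Fin n → ℂ) (μ h : Fin n → ℝ)
    (hz : ∀ j, ‖z j‖ = 1) (hinj : Function.Injective z)
    (hμ : ∀ j, 0 < μ j)
    (F Fh : ℂ → ℂ)
    (hF : ∀ ζ, F ζ = ∑ j, (μ j : ℂ) * (z j + ζ) / (z j - ζ))
    (hFh : ∀ ζ, Fh ζ = ∑ j, (h j : ℂ) * (μ j : ℂ) * (z j + ζ) / (z j - ζ)) :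
    ∀ zz ww : ℂ, zz ≠ ww → (∀ j, zz ≠ z j) → (∀ j, ww ≠ z j) →
      Complex.I * (ww - zz) *
        ∑ j, ∑ k, ((z j + z k) * ((h j : ℂ) + (h k : ℂ)) * (z j * z k + zz * ww)) /
          ((z j - zz) * (z k - zz) * (z j - ww) * (z k - ww)) *
          ((μ j : ℂ) * (μ k : ℂ)) =
      Complex.I * ((ww + zz) / (ww - zz)) * (F zz - F ww) * (Fh zz - Fh ww) -
        Complex.I * F 0 * (Fh zz - Fh ww) - Complex.I * Fh 0 * (F zz - F ww) :=
  statement14_general n z μ h hz F Fh hF hFh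
end

section
/- Let N ≥ 1 and let z₁,…,z_{2N} be distinct points on the unit circle with z_{s+N} = conj(z_s) and Im z_s > 0 for 1 ≤ s ≤ N; let μ₁,…,μ_{2N} be positive reals with μ_{s+N} = μ_s for 1 ≤ s ≤ N and Σ_{a=1}^{2N} μ_a = 1. Let h be a complex-valued function on the unit circle taking real values, and set h₊(z) := (h(z)+h(conj z))/2 and h₋(z) := (h(z)−h(conj z))/2. Define, for 1 ≤ a, b ≤ 2N, the numbers B(a,b) := 2i z_a h(z_a) μ_b (δ_{ab} − μ_a) (the h-bracket values {z_a, μ_b}_h). Then for all 1 ≤ s, t ≤ N: B(s,t) + B(s, t+N) + B(s+N, t) + B(s+N, t+N) = 2i(z_s + conj(z_s)) h₊(z_s) μ_t (δ_{st} − 2μ_s) + 2i(z_s − conj(z_s)) h₋(z_s) μ_t (δ_{st} − 2μ_s). In particular, if h(conj z) = −h(z) for all z on the unit circle, then this quantity equals 2i(z_s − conj(z_s)) h(z_s) μ_t (δ_{st} − 2μ_s), which is a real number. -/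
/-!
The cross terms carry no Kronecker delta, since `s ≠ t + N`, so the symmetry `z_{s+N} = conj z_s`,
`μ_{s+N} = μ_s` collapses the four brackets to `2i μ_t (δ_{st} − 2μ_s) (z h(z) + conj z h(conj z))`
at `z = z_s`; splitting `h` into even and odd parts gives the formula. For odd `h` the prefactor
`2i (z − conj z) = −4 Im z` is real.
-/

open Complex ComplexConjugate

/-- The coordinate bracket `{z_a, μ_b}_h`. -/
def hBracket (z : ℕ → ℂ) (h : ℂ → ℂ) (μ : ℕ → ℝ) (a b : ℕ) : ℂ :=
  2 * I * z a * h (z a) * (μ b : ℂ) * ((if a = b then 1 else 0) - (μ a : ℂ))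

theorem hBracket_conj_pair_sum {z : ℕ → ℂ} {h : ℂ → ℂ} {μ : ℕ → ℝ} {N s t : ℕ}
    (hst : s ≠ t + N) (hts : s + N ≠ t) (hz : z (s + N) = conj (z s))
    (hμs : μ (s + N) = μ s) (hμt : μ (t + N) = μ t) :
    hBracket z h μ s t + hBracket z h μ s (t + N) + hBracket z h μ (s + N) t
        + hBracket z h μ (s + N) (t + N) =
      2 * I * μ t * ((if s = t then 1 else 0) - 2 * μ s) *
        (z s * h (z s) + conj (z s) * h (conj (z s))) := by
  simp only [hBracket, hz, hμs, hμt, add_left_inj, if_neg hst, if_neg hts]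
  ring

theorem two_I_mul_sub_conj (w : ℂ) : 2 * I * (w - conj w) = ((-4 * w.im : ℝ) : ℂ) := by
  rw [sub_conj]
  push_cast
  ring_nf
  rw [I_sq]
  ring

theorem statement18_general (N : ℕ) (z : ℕ → ℂ) (μ : ℕ → ℝ)
    (hsym : ∀ s, 1 ≤ s → s ≤ N →
      z (s + N) = (starRingEnd ℂ) (z s) ∧ μ (s + N) = μ s ∧ 0 < (z s).im)
    (hz1 : ∀ a ∈ Finset.Icc 1 (2 * N), ‖z a‖ = 1)
    (h : ℂ → ℂ) (hreal : ∀ ζ : ℂ, ‖ζ‖ = 1 → (h ζ).im = 0)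
    (hp hm : ℂ → ℂ)
    (hhp : ∀ ζ, hp ζ = (h ζ + h ((starRingEnd ℂ) ζ)) / 2)
    (hhm : ∀ ζ, hm ζ = (h ζ - h ((starRingEnd ℂ) ζ)) / 2)
    (B : ℕ → ℕ → ℂ)
    (hB : ∀ a b, B a b = 2 * Complex.I * z a * h (z a) * (μ b : ℂ) *
      ((if a = b then 1 else 0) - (μ a : ℂ))) :
    ∀ s t, 1 ≤ s → s ≤ N → 1 ≤ t → t ≤ N →
      (B s t + B s (t + N) + B (s + N) t + B (s + N) (t + N) =
        2 * Complex.I * (z s + (starRingEnd ℂ) (z s)) * hp (z s) * (μ t : ℂ) *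
          ((if s = t then 1 else 0) - 2 * (μ s : ℂ)) +
        2 * Complex.I * (z s - (starRingEnd ℂ) (z s)) * hm (z s) * (μ t : ℂ) *
          ((if s = t then 1 else 0) - 2 * (μ s : ℂ))) ∧
      ((∀ ζ : ℂ, ‖ζ‖ = 1 → h ((starRingEnd ℂ) ζ) = -h ζ) →
        B s t + B s (t + N) + B (s + N) t + B (s + N) (t + N) =
          2 * Complex.I * (z s - (starRingEnd ℂ) (z s)) * h (z s) * (μ t : ℂ) *
            ((if s = t then 1 else 0) - 2 * (μ s : ℂ)) ∧
        (B s t + B s (t + N) + B (s + N) t + B (s + N) (t + N)).im = 0) := by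
  intro s t hs1 hsN ht1 htN
  obtain rfl : B = hBracket z h μ := funext₂ hB
  obtain ⟨hzs, hμs, -⟩ := hsym s hs1 hsN
  have hsum := hBracket_conj_pair_sum (h := h) (by omega) (by omega) hzs hμs
    (hsym t ht1 htN).2.1
  have hunit : ‖z s‖ = 1 := hz1 s (Finset.mem_Icc.mpr ⟨hs1, by omega⟩)
  refine ⟨by rw [hsum, hhp, hhm]; ring, fun hodd => ?_⟩
  have hodd_sum : hBracket z h μ s t + hBracket z h μ s (t + N) + hBracket z h μ (s + N) t
      + hBracket z h μ (s + N) (t + N) =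
      2 * I * (z s - conj (z s)) * h (z s) * μ t * ((if s = t then 1 else 0) - 2 * μ s) := by
    rw [hsum, hodd _ hunit]
    ring
  refine ⟨hodd_sum, ?_⟩
  rw [hodd_sum, two_I_mul_sub_conj, ← re_add_im (h (z s)), hreal _ hunit]
  split_ifs <;> simp [mul_im]

/-- (Key computation in Proposition 6.1.) For a conjugation-symmetric
probability measure on the unit circle (atoms `z_{s+N} = conj(z_s)` with equal weights
`μ_{s+N} = μ_s`), with `B(a,b) = {z_a, μ_b}_h = 2i z_a h(z_a) μ_b (δ_{ab} − μ_a)` and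
`h₊, h₋` the even and odd parts of `h`, for all `1 ≤ s,t ≤ N`:
`B(s,t) + B(s,t+N) + B(s+N,t) + B(s+N,t+N)
  = 2i(z_s + conj z_s) h₊(z_s) μ_t (δ_{st} − 2μ_s)
    + 2i(z_s − conj z_s) h₋(z_s) μ_t (δ_{st} − 2μ_s)`;
and if `h(conj z) = −h(z)` on the circle, this equals
`2i(z_s − conj z_s) h(z_s) μ_t (δ_{st} − 2μ_s)`, a real number. -/
theorem statement18 (N : ℕ) (hN : 1 ≤ N) (z : ℕ → ℂ) (μ : ℕ → ℝ)
    (hsym : ∀ s, 1 ≤ s → s ≤ N →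
      z (s + N) = (starRingEnd ℂ) (z s) ∧ μ (s + N) = μ s ∧ 0 < (z s).im)
    (hz1 : ∀ a ∈ Finset.Icc 1 (2 * N), ‖z a‖ = 1)
    (hdist : ∀ a ∈ Finset.Icc 1 (2 * N), ∀ b ∈ Finset.Icc 1 (2 * N),
      a ≠ b → z a ≠ z b)
    (hμpos : ∀ a ∈ Finset.Icc 1 (2 * N), 0 < μ a)
    (hsum : ∑ a ∈ Finset.Icc 1 (2 * N), μ a = 1)
    (h : ℂ → ℂ) (hreal : ∀ ζ : ℂ, ‖ζ‖ = 1 → (h ζ).im = 0)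
    (hp hm : ℂ → ℂ)
    (hhp : ∀ ζ, hp ζ = (h ζ + h ((starRingEnd ℂ) ζ)) / 2)
    (hhm : ∀ ζ, hm ζ = (h ζ - h ((starRingEnd ℂ) ζ)) / 2)
    (B : ℕ → ℕ → ℂ)
    (hB : ∀ a b, B a b = 2 * Complex.I * z a * h (z a) * (μ b : ℂ) *
      ((if a = b then 1 else 0) - (μ a : ℂ))) :
    ∀ s t, 1 ≤ s → s ≤ N → 1 ≤ t → t ≤ N →
      (B s t + B s (t + N) + B (s + N) t + B (s + N) (t + N) =
        2 * Complex.I * (z s + (starRingEnd ℂ) (z s)) * hp (z s) * (μ t : ℂ) *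
          ((if s = t then 1 else 0) - 2 * (μ s : ℂ)) +
        2 * Complex.I * (z s - (starRingEnd ℂ) (z s)) * hm (z s) * (μ t : ℂ) *
          ((if s = t then 1 else 0) - 2 * (μ s : ℂ))) ∧
      ((∀ ζ : ℂ, ‖ζ‖ = 1 → h ((starRingEnd ℂ) ζ) = -h ζ) →
        B s t + B s (t + N) + B (s + N) t + B (s + N) (t + N) =
          2 * Complex.I * (z s - (starRingEnd ℂ) (z s)) * h (z s) * (μ t : ℂ) *
            ((if s = t then 1 else 0) - 2 * (μ s : ℂ)) ∧
        (B s t + B s (t + N) + B (s + N) t + B (s + N) (t + N)).im = 0) :=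
  statement18_general N z μ hsym hz1 h hreal hp hm hhp hhm B hB
end
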